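/- Let β : [a,b] → ℝ² be a regular C² curve that is n-convex. Then β is a finite concatenation of sub-spirals, i.e. there exist a = s₀ < s₁ < … < s_m = b such that each restriction β|[s_j, s_{j+1}] is a C² curve with no self-intersections whose signed curvature does not change sign. -/

import Mathlib

/-!
On an arc lying in the boundary of a convex set `A` the signed curvature cannot change sign.
If `A` has an interior point `x₀`, a supporting line at `β u` keeps the arc on one side, so
`β'' u` points to the side of the tangent line where `x₀` lies; as the arc never meets the
interior, `x₀` stays on the same side of every tangent line. If `A` has empty interior, the arc
lies on a line and its curvature vanishes. Regularity makes `β` injective on all subintervals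
shorter than some uniform `δ > 0`, so cutting each convex arc into pieces shorter than `δ`
yields the sub-spirals.
-/

open Set

noncomputable section

/-- A continuous planar curve `β : [a,b] → ℝ²` is `n`-convex if `[a,b]` can be split
into `n` consecutive subintervals on each of which the image of `β` lies in the
boundary of a convex set. -/
def NConvex (β : ℝ → EuclideanSpace ℝ (Fin 2)) (a b : ℝ) (n : ℕ) : Prop :=
  ∃ t : Fin (n + 1) → ℝ, StrictMono t ∧ t 0 = a ∧ t (Fin.last n) = b ∧
    ∀ j : Fin n, ∃ A : Set (EuclideanSpace ℝ (Fin 2)), Convex ℝ A ∧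
      β '' Icc (t j.castSucc) (t j.succ) ⊆ frontier A

/-- The numerator `x'y'' − y'x''` of the signed curvature of a planar curve. -/
def curvDet (β : ℝ → EuclideanSpace ℝ (Fin 2)) (u : ℝ) : ℝ :=
  deriv β u 0 * deriv (deriv β) u 1 - deriv β u 1 * deriv (deriv β) u 0

open Filter Topology Relation

local notation "ℝ²" => EuclideanSpace ℝ (Fin 2)

theorem reflTransGen_lt_and_iff_exists_fin {α : Type*} [Preorder α] {P : α → α → Prop}
    {a b : α} :
    ReflTransGen (fun x y => x < y ∧ P x y) a b ↔
      ∃ m : ℕ, ∃ s : Fin (m + 1) → α, StrictMono s ∧ s 0 = a ∧ s (Fin.last m) = b ∧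
        ∀ j : Fin m, P (s j.castSucc) (s j.succ) := by
  constructor
  · intro h
    induction h with
    | refl => exact ⟨0, fun _ => a, Fin.strictMono_iff_lt_succ.2 Fin.elim0, rfl, rfl, Fin.elim0⟩
    | @tail b c _ hbc ih =>
      obtain ⟨m, s, hs, hs0, hsm, hP⟩ := ih
      refine ⟨m + 1, Fin.snoc s c, Fin.strictMono_iff_lt_succ.2 fun j => ?_, ?_, by simp,
        fun j => ?_⟩
      · induction j using Fin.lastCases with
        | last => simpa [Fin.succ_last, hsm] using hbc.1
        | cast j =>
          simpa only [Fin.succ_castSucc, Fin.snoc_castSucc] using hs j.castSucc_lt_succ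
      · rw [← Fin.castSucc_zero, Fin.snoc_castSucc, hs0]
      · induction j using Fin.lastCases with
        | last => simpa [Fin.succ_last, hsm] using hbc.2
        | cast j => simpa only [Fin.succ_castSucc, Fin.snoc_castSucc] using hP j
  · rintro ⟨m, s, hs, rfl, rfl, hP⟩
    suffices ∀ j : Fin (m + 1), ReflTransGen (fun x y => x < y ∧ P x y) (s 0) (s j) from this _
    intro j
    induction j using Fin.induction with
    | zero => rfl
    | succ j ih => exact ih.tail ⟨hs j.castSucc_lt_succ, hP j⟩

theorem reflTransGen_of_forall_sub_lt {P : ℝ → ℝ → Prop} {c d δ : ℝ} (hδ : 0 < δ)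
    (hcd : c ≤ d) (hP : ∀ x y, c ≤ x → x < y → y ≤ d → y - x < δ → P x y) :
    ReflTransGen (fun x y => x < y ∧ P x y) c d := by
  rcases hcd.eq_or_lt with rfl | hcd
  · rfl
  obtain ⟨k, hk⟩ := exists_nat_gt ((d - c) / δ)
  have hk0 : (0 : ℝ) < k := lt_trans (by bound) hk
  obtain ⟨h, hh, hhδ, hkh⟩ : ∃ h : ℝ, 0 < h ∧ h < δ ∧ k * h = d - c :=
    ⟨(d - c) / k, by bound, by rwa [div_lt_iff₀ hk0, mul_comm, ← div_lt_iff₀ hδ],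
      mul_div_cancel₀ _ hk0.ne'⟩
  have hgrid : ∀ j : ℕ, j ≤ k → ReflTransGen (fun x y => x < y ∧ P x y) c (c + j * h) := by
    intro j
    induction j with
    | zero => intro _; simpa using ReflTransGen.refl
    | succ j ih =>
      intro hj
      have hjk : ((j + 1 : ℕ) : ℝ) * h ≤ k * h := by gcongr
      push_cast at hjk ⊢
      exact (ih (by omega)).tail
        ⟨by linarith, hP _ _ (by bound) (by linarith) (by linarith) (by linarith)⟩
  simpa [hkh] using hgrid k le_rfl

section Calculus

variable {E : Type*} [NormedAddCommGroup E] [NormedSpace ℝ E]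

theorem exists_pos_forall_injOn_Icc {f f' : ℝ → E} {a b : ℝ}
    (hf : ∀ t ∈ Icc a b, HasDerivWithinAt f (f' t) (Icc a b) t)
    (hf' : ContinuousOn f' (Icc a b)) (hne : ∀ t ∈ Icc a b, f' t ≠ 0) :
    ∃ δ > 0, ∀ x y, a ≤ x → y ≤ b → y - x < δ → InjOn f (Icc x y) := by
  obtain ⟨ε, hε, hεle⟩ := isCompact_Icc.exists_forall_le' hf'.norm
    fun t ht => norm_pos_iff.2 (hne t ht)
  obtain ⟨δ, hδ, hclose⟩ := Metric.uniformContinuousOn_iff.1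
    (isCompact_Icc.uniformContinuousOn_of_continuous hf') (ε / 2) (half_pos hε)
  refine ⟨δ, hδ, fun x y hax hyb hxy => ?_⟩
  suffices ∀ u ∈ Icc x y, ∀ v ∈ Icc x y, u < v → f u ≠ f v by
    intro u hu v hv huv
    rcases lt_trichotomy u v with h | h | h
    exacts [absurd huv (this u hu v hv h), h, absurd huv.symm (this v hv u hu h)]
  intro u hu v hv huv hfuv
  have hsub : Icc u v ⊆ Icc a b := Icc_subset_Icc (hax.trans hu.1) (hv.2.trans hyb)
  have hu' : u ∈ Icc a b := hsub (left_mem_Icc.2 huv.le)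
  -- on `[u, v]`, `f` stays within `ε / 2 * (v - u)` of its tangent line at `u`
  have hmvt : ‖f v - (v - u) • f' u - f u‖ ≤ ε / 2 * (v - u) := by
    have := norm_image_sub_le_of_norm_deriv_le_segment' (f := fun t => f t - (t - u) • f' u)
      (f' := fun t => f' t - f' u) (C := ε / 2) (fun t ht => ?_) (fun t ht => ?_) v
      (right_mem_Icc.2 huv.le)
    · simpa using this
    · have hlin : HasDerivWithinAt (fun t => (t - u) • f' u) (f' u) (Icc u v) t := by
        simpa using ((hasDerivWithinAt_id t _).sub_const u).smul_const (f' u)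
      exact ((hf t (hsub ht)).mono hsub).sub hlin
    · rw [← dist_eq_norm]
      refine (hclose t (hsub (Ico_subset_Icc_self ht)) u hu' ?_).le
      rw [Real.dist_eq, abs_of_nonneg (by linarith [ht.1])]
      linarith [ht.2, hu.1, hv.2]
  rw [hfuv, sub_sub_cancel_left, norm_neg, norm_smul, Real.norm_of_nonneg (by linarith)] at hmvt
  nlinarith [hεle u hu']

theorem IsLocalMax.nonpos_of_hasDerivAt_deriv {f f' : ℝ → ℝ} {x K : ℝ} (hmax : IsLocalMax f x)
    (hf : ∀ᶠ y in 𝓝 x, HasDerivAt f (f' y) y) (hf' : HasDerivAt f' K x) : K ≤ 0 := by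
  by_contra! hK
  have hderiv : deriv f =ᶠ[𝓝 x] f' := hf.mono fun y hy => hy.deriv
  have hK' : deriv (deriv f) x = K := (hf'.congr_of_eventuallyEq hderiv).deriv
  -- by the second derivative test `x` is also a local minimum, so `f` is locally constant
  have hmin : IsLocalMin f x :=
    isLocalMin_of_deriv_deriv_pos (hK' ▸ hK) hmax.deriv_eq_zero hf.self_of_nhds.continuousAt
  have hconst : f =ᶠ[𝓝 x] fun _ => f x :=
    (hmin.and hmax).mono fun y hy => le_antisymm hy.2 hy.1
  have hzero : deriv f =ᶠ[𝓝 x] fun _ => 0 :=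
    hconst.eventuallyEq_nhds.mono fun y hy => by simpa using hy.deriv_eq
  rw [hzero.deriv_eq, deriv_const] at hK'
  exact hK.ne hK'

theorem map_deriv_eq_zero_and_map_deriv_deriv_nonpos {β β' β'' : ℝ → E} {u : ℝ}
    (φ : E →L[ℝ] ℝ) (hβ : ∀ᶠ t in 𝓝 u, HasDerivAt β (β' t) t) (hβ' : HasDerivAt β' (β'' u) u)
    (hmax : ∀ᶠ t in 𝓝 u, φ (β t) ≤ φ (β u)) : φ (β' u) = 0 ∧ φ (β'' u) ≤ 0 := by
  have hφβ : ∀ᶠ t in 𝓝 u, HasDerivAt (fun t => φ (β t)) (φ (β' t)) t :=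
    hβ.mono fun t ht => φ.hasFDerivAt.comp_hasDerivAt t ht
  exact ⟨IsLocalMax.hasDerivAt_eq_zero hmax hφβ.self_of_nhds,
    IsLocalMax.nonpos_of_hasDerivAt_deriv hmax hφβ (φ.hasFDerivAt.comp_hasDerivAt u hβ')⟩

theorem ContDiffOn.deriv_of_differentiableAt {f : ℝ → E} {s : Set ℝ} {m n : WithTop ℕ∞}
    (hf : ContDiffOn ℝ n f s) (hs : UniqueDiffOn ℝ s) (hmn : m + 1 ≤ n)
    (hd : ∀ x ∈ s, DifferentiableAt ℝ f x) : ContDiffOn ℝ m (deriv f) s :=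
  (hf.derivWithin hs hmn).congr fun x hx => ((hd x hx).derivWithin (hs x hx)).symm

end Calculus

section Convex

variable {E : Type*} [NormedAddCommGroup E] [NormedSpace ℝ E] {A : Set E}

theorem Convex.exists_forall_le_of_mem_frontier (hA : Convex ℝ A) {x₀ p : E}
    (hx₀ : x₀ ∈ interior A) (hp : p ∈ frontier A) :
    ∃ φ : E →L[ℝ] ℝ, φ x₀ < φ p ∧ ∀ y ∈ closure A, φ y ≤ φ p := by
  obtain ⟨φ, hφ⟩ := geometric_hahn_banach_open_point hA.interior isOpen_interior hp.2
  refine ⟨φ, hφ x₀ hx₀, ?_⟩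
  rw [← hA.closure_interior_eq_closure_of_nonempty_interior ⟨x₀, hx₀⟩]
  exact closure_minimal (fun y hy => (hφ y hy).le) (isClosed_le φ.continuous continuous_const)

theorem Convex.exists_ne_zero_forall_eq_of_interior_eq_empty [FiniteDimensional ℝ E]
    (hA : Convex ℝ A) (hne : A.Nonempty) (hint : interior A = ∅) :
    ∃ φ : E →L[ℝ] ℝ, φ ≠ 0 ∧ ∀ x ∈ closure A, ∀ y ∈ closure A, φ x = φ y := by
  have hspan : affineSpan ℝ A ≠ ⊤ := fun h => by
    simpa [hint] using hA.interior_nonempty_iff_affineSpan_eq_top.2 h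
  have hdir : (affineSpan ℝ A).direction < ⊤ := lt_top_iff_ne_top.2 fun h => hspan <|
    (AffineSubspace.direction_eq_top_iff_of_nonempty (hne.mono (subset_affineSpan ℝ A))).1 h
  obtain ⟨f, hf0, hker⟩ := Submodule.exists_le_ker_of_lt_top _ hdir
  refine ⟨LinearMap.toContinuousLinearMap f, by simpa using hf0, fun x hx y hy => ?_⟩
  have hcl : closure A ⊆ affineSpan ℝ A :=
    closure_minimal (subset_affineSpan ℝ A) (AffineSubspace.closed_of_finiteDimensional _)
  have := hker (AffineSubspace.vsub_mem_direction (hcl hx) (hcl hy))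
  rwa [LinearMap.mem_ker, vsub_eq_sub, map_sub, sub_eq_zero] at this

end Convex

theorem IsPreconnected.forall_pos_or_forall_neg {X : Type*} [TopologicalSpace X] {s : Set X}
    (hs : IsPreconnected s) {f : X → ℝ} (hf : ContinuousOn f s) (h0 : ∀ x ∈ s, f x ≠ 0) :
    (∀ x ∈ s, 0 < f x) ∨ (∀ x ∈ s, f x < 0) := by
  by_contra! ⟨⟨x, hx, hfx⟩, ⟨y, hy, hfy⟩⟩
  obtain ⟨z, hz, hfz⟩ := hs.intermediate_value hx hy hf ⟨hfx, hfy⟩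
  exact h0 z hz hfz

def HasConstSignOn (F : ℝ → ℝ) (s : Set ℝ) : Prop :=
  (∀ u ∈ s, 0 ≤ F u) ∨ (∀ u ∈ s, F u ≤ 0)

namespace HasConstSignOn

variable {F G : ℝ → ℝ} {s t : Set ℝ}

theorem mono (h : HasConstSignOn F s) (hts : t ⊆ s) : HasConstSignOn F t :=
  h.imp (fun h u hu => h u (hts hu)) (fun h u hu => h u (hts hu))

theorem closure_of_continuousOn (h : HasConstSignOn F s) (hF : ContinuousOn F (closure s)) :
    HasConstSignOn F (closure s) :=
  h.imp (fun h => le_on_closure h continuousOn_const hF)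
    (fun h => le_on_closure h hF continuousOn_const)

theorem of_eq_or_eq_zero (h : HasConstSignOn F s) (hG : ∀ u ∈ s, G u = F u ∨ G u = 0) :
    HasConstSignOn G s := by
  refine h.imp (fun h u hu => ?_) (fun h u hu => ?_) <;>
    rcases hG u hu with hu' | hu' <;> simp [hu', h u hu]

end HasConstSignOn

def cross (v w : ℝ²) : ℝ := v 0 * w 1 - v 1 * w 0

theorem continuousOn_cross {X : Type*} [TopologicalSpace X] {f g : X → ℝ²} {s : Set X}
    (hf : ContinuousOn f s) (hg : ContinuousOn g s) :
    ContinuousOn (fun x => cross (f x) (g x)) s := by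
  unfold cross
  fun_prop

theorem exists_eq_mul_cross_of_apply_eq_zero (φ : ℝ² →L[ℝ] ℝ) {v : ℝ²} (hv : v ≠ 0)
    (hφv : φ v = 0) : ∃ l : ℝ, ∀ w, φ w = l * cross v w := by
  have hφ : ∀ w : ℝ², φ w = w 0 * φ (EuclideanSpace.single 0 1) +
      w 1 * φ (EuclideanSpace.single 1 1) := by
    intro w
    conv_lhs => rw [show w = w 0 • EuclideanSpace.single 0 1 + w 1 • EuclideanSpace.single 1 1 by
      ext i; fin_cases i <;> simp]
    simp
  have hv2 : 0 < v 0 ^ 2 + v 1 ^ 2 := by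
    simpa [EuclideanSpace.real_norm_sq_eq, Fin.sum_univ_two] using pow_pos (norm_pos_iff.2 hv) 2
  refine ⟨(v 0 * φ (EuclideanSpace.single 1 1) - v 1 * φ (EuclideanSpace.single 0 1)) /
    (v 0 ^ 2 + v 1 ^ 2), fun w => ?_⟩
  rw [hφ] at hφv ⊢
  field_simp
  unfold cross
  linear_combination (w 0 * v 0 + w 1 * v 1) * hφv

section Curve

variable {β β' β'' : ℝ → ℝ²} {u : ℝ}

theorem cross_eq_zero_of_eventually_apply_eq (φ : ℝ² →L[ℝ] ℝ) (hφ : φ ≠ 0)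
    (hβ : ∀ᶠ t in 𝓝 u, HasDerivAt β (β' t) t) (hβ' : HasDerivAt β' (β'' u) u)
    (hne : β' u ≠ 0) (hconst : ∀ᶠ t in 𝓝 u, φ (β t) = φ (β u)) :
    cross (β' u) (β'' u) = 0 := by
  obtain ⟨hφ', hφ''⟩ := map_deriv_eq_zero_and_map_deriv_deriv_nonpos φ hβ hβ' <|
    hconst.mono fun t ht => ht.le
  obtain ⟨-, hφ''neg⟩ := map_deriv_eq_zero_and_map_deriv_deriv_nonpos (-φ) hβ hβ' <|
    hconst.mono fun t ht => by simp [ht]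
  obtain ⟨l, hl⟩ := exists_eq_mul_cross_of_apply_eq_zero φ hne hφ'
  have hl0 : l ≠ 0 := by
    rintro rfl
    exact hφ (ContinuousLinearMap.ext fun w => by simpa using hl w)
  have : l * cross (β' u) (β'' u) = 0 := by
    rw [← hl]
    simp only [neg_apply, neg_nonpos] at hφ''neg
    exact le_antisymm hφ'' hφ''neg
  exact (mul_eq_zero.1 this).resolve_left hl0

theorem cross_ne_zero_and_cross_mul_cross_nonneg {A : Set ℝ²} (hA : Convex ℝ A) {x₀ : ℝ²}
    (hx₀ : x₀ ∈ interior A) (hβ : ∀ᶠ t in 𝓝 u, HasDerivAt β (β' t) t)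
    (hβ' : HasDerivAt β' (β'' u) u) (hne : β' u ≠ 0) (hfr : β u ∈ frontier A)
    (hcl : ∀ᶠ t in 𝓝 u, β t ∈ closure A) :
    cross (β' u) (x₀ - β u) ≠ 0 ∧ 0 ≤ cross (β' u) (x₀ - β u) * cross (β' u) (β'' u) := by
  obtain ⟨φ, hφx₀, hφA⟩ := hA.exists_forall_le_of_mem_frontier hx₀ hfr
  obtain ⟨hφ', hφ''⟩ := map_deriv_eq_zero_and_map_deriv_deriv_nonpos φ hβ hβ' <|
    hcl.mono fun t ht => hφA _ ht
  obtain ⟨l, hl⟩ := exists_eq_mul_cross_of_apply_eq_zero φ hne hφ'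
  have hx : l * cross (β' u) (x₀ - β u) < 0 := by rw [← hl, map_sub]; linarith
  rw [hl] at hφ''
  have hl0 : l ≠ 0 := by rintro rfl; simp at hx
  refine ⟨fun h => by simp [h] at hx, ?_⟩
  have h := mul_nonneg_of_nonpos_of_nonpos hx.le hφ''
  rw [mul_mul_mul_comm] at h
  exact nonneg_of_mul_nonneg_right h (mul_self_pos.2 hl0)

theorem hasConstSignOn_cross_of_mapsTo_frontier {U : Set ℝ} (hUo : IsOpen U)
    (hUc : IsPreconnected U) {A : Set ℝ²} (hA : Convex ℝ A)
    (hβ : ∀ u ∈ U, HasDerivAt β (β' u) u) (hβ' : ∀ u ∈ U, HasDerivAt β' (β'' u) u)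
    (hne : ∀ u ∈ U, β' u ≠ 0) (hfr : MapsTo β U (frontier A)) :
    HasConstSignOn (fun u => cross (β' u) (β'' u)) U := by
  have hβev : ∀ u ∈ U, ∀ᶠ t in 𝓝 u, HasDerivAt β (β' t) t := fun u hu =>
    eventually_of_mem (hUo.mem_nhds hu) hβ
  have hcl : ∀ u ∈ U, ∀ᶠ t in 𝓝 u, β t ∈ closure A := fun u hu =>
    eventually_of_mem (hUo.mem_nhds hu) fun t ht => frontier_subset_closure (hfr ht)
  rcases (interior A).eq_empty_or_nonempty with hint | ⟨x₀, hx₀⟩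
  · refine Or.inl fun u hu => ?_
    obtain ⟨φ, hφ, hconst⟩ := hA.exists_ne_zero_forall_eq_of_interior_eq_empty
      (closure_nonempty_iff.1 ⟨β u, frontier_subset_closure (hfr hu)⟩) hint
    refine (cross_eq_zero_of_eventually_apply_eq φ hφ (hβev u hu) (hβ' u hu) (hne u hu) ?_).ge
    exact (hcl u hu).mono fun t ht => hconst _ ht _ (frontier_subset_closure (hfr hu))
  · -- the sign of `cross (β' u) (x₀ - β u)` tells on which side of the tangent line `x₀` lies
    have hside := fun u hu => cross_ne_zero_and_cross_mul_cross_nonneg hA hx₀ (hβev u hu)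
      (hβ' u hu) (hne u hu) (hfr hu) (hcl u hu)
    have hcont : ContinuousOn (fun u => cross (β' u) (x₀ - β u)) U :=
      continuousOn_cross (fun u hu => (hβ' u hu).continuousAt.continuousWithinAt)
        (fun u hu => (continuousAt_const.sub (hβ u hu).continuousAt).continuousWithinAt)
    exact (hUc.forall_pos_or_forall_neg hcont fun u hu => (hside u hu).1).imp
      (fun hpos u hu => nonneg_of_mul_nonneg_right (hside u hu).2 (hpos u hu))
      (fun hneg u hu => nonpos_of_mul_nonneg_right (hside u hu).2 (hneg u hu))

end Curve

-- the junk value `deriv (deriv β) u = 0` where `deriv β` is not differentiable forces the `0` case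
theorem curvDet_eq_or_eq_zero {β : ℝ → ℝ²} {s : Set ℝ} (hs : UniqueDiffOn ℝ s) {u : ℝ}
    (hu : u ∈ s) :
    curvDet β u = cross (deriv β u) (derivWithin (deriv β) s u) ∨ curvDet β u = 0 := by
  by_cases h : DifferentiableAt ℝ (deriv β) u
  · exact Or.inl (by rw [h.derivWithin (hs u hu)]; rfl)
  · exact Or.inr (by simp [curvDet, deriv_zero_of_not_differentiableAt h])

theorem hasConstSignOn_curvDet_of_image_subset_frontier {β : ℝ → ℝ²} {a b c d : ℝ}
    (hC1 : ContDiffOn ℝ 1 (deriv β) (Icc a b)) (hreg : ∀ u ∈ Icc a b, deriv β u ≠ 0)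
    (hac : a ≤ c) (hcd : c < d) (hdb : d ≤ b) {A : Set ℝ²} (hA : Convex ℝ A)
    (hfr : β '' Icc c d ⊆ frontier A) :
    HasConstSignOn (curvDet β) (Icc c d) := by
  have hab : a < b := hac.trans_lt (hcd.trans_le hdb)
  have hIoo : Ioo c d ⊆ Ioo a b := Ioo_subset_Ioo hac hdb
  have hIcc : Icc c d ⊆ Icc a b := Icc_subset_Icc hac hdb
  have hopen : HasConstSignOn
      (fun u => cross (deriv β u) (derivWithin (deriv β) (Icc a b) u)) (Ioo c d) := by
    refine hasConstSignOn_cross_of_mapsTo_frontier isOpen_Ioo isPreconnected_Ioo hA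
      (fun u hu => ?_) (fun u hu => ?_) (fun u hu => hreg u (hIcc (Ioo_subset_Icc_self hu)))
      (fun u hu => hfr (mem_image_of_mem β (Ioo_subset_Icc_self hu)))
    · exact (differentiableAt_of_deriv_ne_zero (hreg u (hIcc (Ioo_subset_Icc_self hu)))).hasDerivAt
    · exact (hC1.differentiableOn one_ne_zero u (Ioo_subset_Icc_self (hIoo hu))).hasDerivWithinAt
        |>.hasDerivAt (Icc_mem_nhds (hIoo hu).1 (hIoo hu).2)
  have hcont := continuousOn_cross hC1.continuousOn
    (hC1.continuousOn_derivWithin (uniqueDiffOn_Icc hab) le_rfl)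
  rw [← closure_Ioo hcd.ne] at hIcc ⊢
  exact (hopen.closure_of_continuousOn (hcont.mono hIcc)).of_eq_or_eq_zero
    fun u hu => curvDet_eq_or_eq_zero (uniqueDiffOn_Icc hab) (hIcc hu)

/-- An `n`-convex regular `C²` curve is a finite concatenation of sub-spirals: the
domain splits into finitely many subintervals on which `β` is injective and its signed
curvature does not change sign. -/
theorem nConvex_concat_subspirals (a b : ℝ) (hab : a < b) (n : ℕ)
    (β : ℝ → EuclideanSpace ℝ (Fin 2))
    (hC2 : ContDiffOn ℝ 2 β (Icc a b))
    (hreg : ∀ u ∈ Icc a b, deriv β u ≠ 0)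
    (hconv : NConvex β a b n) :
    ∃ m : ℕ, ∃ s : Fin (m + 1) → ℝ, StrictMono s ∧ s 0 = a ∧ s (Fin.last m) = b ∧
      ∀ j : Fin m,
        Set.InjOn β (Icc (s j.castSucc) (s j.succ)) ∧
          ((∀ u ∈ Icc (s j.castSucc) (s j.succ), 0 ≤ curvDet β u) ∨
            (∀ u ∈ Icc (s j.castSucc) (s j.succ), curvDet β u ≤ 0)) := by
  have hdiff : ∀ u ∈ Icc a b, DifferentiableAt ℝ β u := fun u hu =>
    differentiableAt_of_deriv_ne_zero (hreg u hu)
  have hC1 : ContDiffOn ℝ 1 (deriv β) (Icc a b) :=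
    hC2.deriv_of_differentiableAt (uniqueDiffOn_Icc hab) le_rfl hdiff
  obtain ⟨δ, hδ, hinj⟩ := exists_pos_forall_injOn_Icc
    (fun u hu => (hdiff u hu).hasDerivAt.hasDerivWithinAt) hC1.continuousOn hreg
  obtain ⟨t, ht, ht0, htn, harc⟩ := hconv
  have hchain : ReflTransGen (fun x y => x < y ∧ a ≤ x ∧ y ≤ b ∧
      ∃ A : Set ℝ², Convex ℝ A ∧ β '' Icc x y ⊆ frontier A) a b :=
    reflTransGen_lt_and_iff_exists_fin.2 ⟨n, t, ht, ht0, htn, fun j =>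
      ⟨ht0 ▸ ht.monotone (Fin.zero_le _), htn ▸ ht.monotone (Fin.le_last _), harc j⟩⟩
  refine (reflTransGen_lt_and_iff_exists_fin (P := fun x y =>
    InjOn β (Icc x y) ∧ HasConstSignOn (curvDet β) (Icc x y))).1 <|
    reflTransGen_closed (fun c d ⟨hcd, hac, hdb, A, hA, hfr⟩ => ?_) a b hchain
  have hsign := hasConstSignOn_curvDet_of_image_subset_frontier hC1 hreg hac hcd hdb hA hfr
  exact reflTransGen_of_forall_sub_lt hδ hcd.le fun x y hcx _ hyd hlen =>
    ⟨hinj x y (hac.trans hcx) (hyd.trans hdb) hlen, hsign.mono (Icc_subset_Icc hcx hyd)⟩
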